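/- arXiv:1007.3402 — 2 statements merged into one kernel-verified Lean document; each statement's English description precedes it below -/
import Mathlib

section
/- Let P, L be n-dimensional linear subspaces of ℝ^{n+1} and M ⊂ B_ρ^{n+1}(0) a set containing 0 with the property that sup_{y∈M} dist(y, P) < ερ and sup_{y∈L∩B_ρ(0)} dist(y, M) ≤ ε₀ρ (so M is ε-close to P and ε₀-close to L in Hausdorff sense on the ball). If ε + ε₀ < 1/2, then the unit normals N of P and ν of L can be chosen so that ‖N − ν‖ ≤ 5(ε + ε₀)/2. -/
open Metric Set RealInnerProductSpace

/-! Let `N` be a unit normal of `P`. For `y ∈ L` with `‖y‖ < ρ`,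
`|⟪N, y⟫| ≤ dist(y, P) ≤ dist(y, M) + sup_{m ∈ M} dist(m, P) ≤ (ε + ε₀) ρ`, so by homogeneity
`|⟪N, w⟫| ≤ (ε + ε₀) ‖w‖` on `L = νᗮ`: the component of `N` in `L` has norm at most `ε + ε₀`.
Choosing the sign of `ν` so that `c = ⟪ν, N⟫ ≥ 0`, this gives
`‖N - ν‖² = 2 - 2c ≤ 2 (1 - c²) ≤ 2 (ε + ε₀)²`, and `√2 ≤ 5 / 2`. -/

theorem ContinuousLinearMap.norm_apply_le_of_forall_norm_lt {E : Type*} [NormedAddCommGroup E]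
    [NormedSpace ℝ E] {f : StrongDual ℝ E} {L : Submodule ℝ E} {r c : ℝ} (hr : 0 < r)
    (h : ∀ y ∈ L, ‖y‖ < r → ‖f y‖ ≤ c) {w : E} (hw : w ∈ L) : ‖f w‖ ≤ c / r * ‖w‖ := by
  set g : StrongDual ℝ L := f.comp L.subtypeL
  have hball : ball (0 : L) r ⊆ {z | ‖g z‖ ≤ c} := fun z hz => h z z.2 (mem_ball_zero_iff.1 hz)
  have hclosedBall : closedBall (0 : L) r ⊆ {z | ‖g z‖ ≤ c} := by
    rw [← closure_ball (0 : L) hr.ne']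
    exact closure_minimal hball (isClosed_le (by fun_prop) continuous_const)
  exact g.toLinearMap.bound_of_ball_bound' hr c hclosedBall ⟨w, hw⟩

theorem Metric.infDist_le_infDist_add_of_forall_infDist_le {α : Type*} [PseudoMetricSpace α]
    {s t : Set α} {r : ℝ} (hs : s.Nonempty) (h : ∀ y ∈ s, infDist y t ≤ r) (x : α) :
    infDist x t ≤ infDist x s + r := by
  rw [← sub_le_iff_le_add, le_infDist hs]
  intro y hy
  linarith [infDist_le_infDist_add_dist (x := x) (y := y) (s := t), h y hy, dist_comm x y]

section InnerProductSpace

variable {E : Type*} [NormedAddCommGroup E] [InnerProductSpace ℝ E]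

theorem Submodule.abs_inner_le_norm_mul_infDist {K : Submodule ℝ E} {N : E} (hN : N ∈ Kᗮ)
    (y : E) : |⟪N, y⟫| ≤ ‖N‖ * infDist y K := by
  rcases (norm_nonneg N).eq_or_lt with h | h
  · simp [norm_eq_zero.1 h.symm]
  rw [← div_le_iff₀' h, le_infDist ⟨0, K.zero_mem⟩]
  intro p hp
  rw [div_le_iff₀' h, dist_eq_norm]
  calc |⟪N, y⟫| = |⟪N, y - p⟫| := by
        rw [inner_sub_right, K.inner_left_of_mem_orthogonal hp hN, sub_zero]
    _ ≤ ‖N‖ * ‖y - p‖ := abs_real_inner_le_norm _ _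

theorem abs_inner_le_of_infDist_le {P L : Submodule ℝ E} {M : Set E} {N : E} {ρ ε ε₀ : ℝ}
    (hρ : 0 < ρ) (hN : N ∈ Pᗮ) (hM : M.Nonempty) (hMP : ∀ y ∈ M, infDist y P ≤ ε * ρ)
    (hLM : ∀ y ∈ (L : Set E) ∩ ball 0 ρ, infDist y M ≤ ε₀ * ρ) {w : E} (hw : w ∈ L) :
    |⟪N, w⟫| ≤ ‖N‖ * (ε + ε₀) * ‖w‖ := by
  have hball : ∀ y ∈ L, ‖y‖ < ρ → ‖innerSL ℝ N y‖ ≤ ‖N‖ * (ε + ε₀) * ρ := by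
    intro y hy hyρ
    calc ‖innerSL ℝ N y‖ = |⟪N, y⟫| := by simp
      _ ≤ ‖N‖ * infDist y P := P.abs_inner_le_norm_mul_infDist hN y
      _ ≤ ‖N‖ * (infDist y M + ε * ρ) := by
        gcongr; exact infDist_le_infDist_add_of_forall_infDist_le hM hMP y
      _ ≤ ‖N‖ * (ε₀ * ρ + ε * ρ) := by
        gcongr; exact hLM y ⟨hy, mem_ball_zero_iff.2 hyρ⟩
      _ = ‖N‖ * (ε + ε₀) * ρ := by ring
  simpa [hρ.ne'] using (innerSL ℝ N).norm_apply_le_of_forall_norm_lt hρ hball hw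

theorem Submodule.norm_starProjection_le_of_abs_inner_le {K : Submodule ℝ E}
    [K.HasOrthogonalProjection] {x : E} {s : ℝ} (hs : 0 ≤ s)
    (h : ∀ w ∈ K, |⟪x, w⟫| ≤ s * ‖w‖) : ‖K.starProjection x‖ ≤ s := by
  set p := K.starProjection x
  have hp : ‖p‖ ^ 2 ≤ s * ‖p‖ := by
    calc ‖p‖ ^ 2 = ⟪x, p⟫ := by
          have := K.starProjection_inner_eq_zero x p (K.starProjection_apply_mem x)
          rw [inner_sub_left, sub_eq_zero] at this
          rw [← real_inner_self_eq_norm_sq, this]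
      _ ≤ |⟪x, p⟫| := le_abs_self _
      _ ≤ s * ‖p‖ := h p (K.starProjection_apply_mem x)
  nlinarith [norm_nonneg p]

theorem norm_sub_le_sqrt_two_mul_norm_starProjection {x ν : E} (hx : ‖x‖ = 1) (hν : ‖ν‖ = 1)
    (h : 0 ≤ ⟪ν, x⟫) : ‖x - ν‖ ≤ √2 * ‖(ℝ ∙ ν)ᗮ.starProjection x‖ := by
  set c := ⟪ν, x⟫ with hc_def
  have hc : c ≤ 1 := by simpa [hx, hν] using real_inner_le_norm ν x
  have hproj : ‖(ℝ ∙ ν)ᗮ.starProjection x‖ ^ 2 = 1 - c ^ 2 := by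
    have hW : (ℝ ∙ ν)ᗮ.starProjection x = x - c • ν := by
      simp [Submodule.starProjection_orthogonal, Submodule.starProjection_unit_singleton ℝ hν, c]
    rw [hW, norm_sub_sq_real, real_inner_smul_right, norm_smul, hx, hν, real_inner_comm,
      ← hc_def, Real.norm_eq_abs, abs_of_nonneg h]
    ring
  have hsub : ‖x - ν‖ ^ 2 = 2 - 2 * c := by
    rw [norm_sub_sq_real, hx, hν, real_inner_comm]; ring
  rw [← pow_le_pow_iff_left₀ (norm_nonneg _) (by positivity) two_ne_zero, mul_pow,
    Real.sq_sqrt zero_le_two, hproj, hsub]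
  nlinarith

theorem Submodule.finrank_orthogonal_eq_one [FiniteDimensional ℝ E] {n : ℕ}
    (hE : Module.finrank ℝ E = n + 1) {K : Submodule ℝ E} (hK : Module.finrank ℝ K = n) :
    Module.finrank ℝ Kᗮ = 1 := by
  have := K.finrank_add_finrank_orthogonal
  omega

theorem Submodule.exists_norm_eq_one_orthogonal_eq_span_inner_nonneg [FiniteDimensional ℝ E]
    {K : Submodule ℝ E} (hK : Module.finrank ℝ Kᗮ = 1) (x : E) :
    ∃ ν : E, ‖ν‖ = 1 ∧ Kᗮ = ℝ ∙ ν ∧ 0 ≤ ⟪ν, x⟫ := by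
  have hK_ne_bot : Kᗮ ≠ ⊥ := by
    rintro h
    rw [h, finrank_bot] at hK
    exact zero_ne_one hK
  obtain ⟨v, hv, hv0⟩ := Kᗮ.exists_mem_ne_zero_of_ne_bot hK_ne_bot
  set u := ‖v‖⁻¹ • v
  have hu : ‖u‖ = 1 := norm_smul_inv_norm hv0
  have hKu : Kᗮ = ℝ ∙ u := by
    refine (Submodule.eq_of_le_of_finrank_eq ?_ ?_).symm
    · exact (Submodule.span_singleton_le_iff_mem _ _).2 (Kᗮ.smul_mem _ hv)
    · rw [finrank_span_singleton (norm_ne_zero_iff.1 (hu ▸ one_ne_zero)), hK]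
  rcases le_total 0 ⟪u, x⟫ with h | h
  · exact ⟨u, hu, hKu, h⟩
  · refine ⟨-u, by rwa [norm_neg], ?_, by rwa [inner_neg_left, neg_nonneg]⟩
    rw [← Set.neg_singleton, Submodule.span_neg, hKu]

end InnerProductSpace

theorem stmt13_general (n : ℕ) (ρ ε ε₀ : ℝ) (hρ : 0 < ρ) (hε : 0 ≤ ε) (hε₀ : 0 ≤ ε₀)
    (P L : Submodule ℝ (EuclideanSpace ℝ (Fin (n + 1))))
    (hPd : Module.finrank ℝ P = n) (hLd : Module.finrank ℝ L = n)
    (M : Set (EuclideanSpace ℝ (Fin (n + 1))))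
    (hM0 : 0 ∈ M)
    (hMP : ∀ y ∈ M, Metric.infDist y (P : Set (EuclideanSpace ℝ (Fin (n + 1)))) < ε * ρ)
    (hLM : ∀ y ∈ (L : Set (EuclideanSpace ℝ (Fin (n + 1)))) ∩ Metric.ball 0 ρ,
      Metric.infDist y M ≤ ε₀ * ρ) :
    ∃ N ν : EuclideanSpace ℝ (Fin (n + 1)),
      ‖N‖ = 1 ∧ ‖ν‖ = 1 ∧ N ∈ Pᗮ ∧ ν ∈ Lᗮ ∧ ‖N - ν‖ ≤ 5 * (ε + ε₀) / 2 := by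
  obtain ⟨N, hN, hPN, -⟩ := P.exists_norm_eq_one_orthogonal_eq_span_inner_nonneg
    (P.finrank_orthogonal_eq_one finrank_euclideanSpace_fin hPd) 0
  obtain ⟨ν, hν, hLν, hNν⟩ := L.exists_norm_eq_one_orthogonal_eq_span_inner_nonneg
    (L.finrank_orthogonal_eq_one finrank_euclideanSpace_fin hLd) N
  have hNP : N ∈ Pᗮ := hPN ▸ Submodule.mem_span_singleton_self N
  have halmost : ∀ w ∈ (ℝ ∙ ν)ᗮ, |⟪N, w⟫| ≤ (ε + ε₀) * ‖w‖ := by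
    rw [← hLν, Submodule.orthogonal_orthogonal]
    intro w hw
    simpa [hN] using abs_inner_le_of_infDist_le hρ hNP ⟨0, hM0⟩ (fun y hy => (hMP y hy).le) hLM hw
  refine ⟨N, ν, hN, hν, hNP, hLν ▸ Submodule.mem_span_singleton_self ν, ?_⟩
  calc ‖N - ν‖ ≤ √2 * ‖(ℝ ∙ ν)ᗮ.starProjection N‖ :=
        norm_sub_le_sqrt_two_mul_norm_starProjection hN hν hNν
    _ ≤ √2 * (ε + ε₀) := by
        gcongr
        exact Submodule.norm_starProjection_le_of_abs_inner_le (by positivity) halmost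
    _ ≤ 5 * (ε + ε₀) / 2 := by nlinarith [Real.sqrt_two_lt_three_halves]

/-- Let `P, L` be `n`-dimensional linear subspaces of `ℝ^{n+1}` and
`M ⊆ B_ρ^{n+1}(0)` a set containing `0` with
`sup_{y ∈ M} dist(y, P) < ε ρ` and `sup_{y ∈ L ∩ B_ρ} dist(y, M) ≤ ε₀ ρ`.
If `ε + ε₀ < 1/2` then unit normals `N` of `P` and `ν` of `L` can be chosen with
`‖N - ν‖ ≤ 5(ε + ε₀)/2`. -/
theorem stmt13 (n : ℕ) (ρ ε ε₀ : ℝ) (hρ : 0 < ρ) (hε : 0 ≤ ε) (hε₀ : 0 ≤ ε₀)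
    (hsum : ε + ε₀ < 1 / 2)
    (P L : Submodule ℝ (EuclideanSpace ℝ (Fin (n + 1))))
    (hPd : Module.finrank ℝ P = n) (hLd : Module.finrank ℝ L = n)
    (M : Set (EuclideanSpace ℝ (Fin (n + 1))))
    (hM0 : 0 ∈ M) (hMb : M ⊆ Metric.ball 0 ρ)
    (hMP : ∀ y ∈ M, Metric.infDist y (P : Set (EuclideanSpace ℝ (Fin (n + 1)))) < ε * ρ)
    (hLM : ∀ y ∈ (L : Set (EuclideanSpace ℝ (Fin (n + 1)))) ∩ Metric.ball 0 ρ,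
      Metric.infDist y M ≤ ε₀ * ρ) :
    ∃ N ν : EuclideanSpace ℝ (Fin (n + 1)),
      ‖N‖ = 1 ∧ ‖ν‖ = 1 ∧ N ∈ Pᗮ ∧ ν ∈ Lᗮ ∧ ‖N - ν‖ ≤ 5 * (ε + ε₀) / 2 :=
  stmt13_general n ρ ε ε₀ hρ hε hε₀ P L hPd hLd M hM0 hMP hLM
end

section
/- Let Ω ⊂ ℝ^n be open and bounded and let u_σ ∈ C¹(Ω̄) satisfy ∫_Ω Dv·Du_σ/√(1+|Du_σ|²) dH^n ≤ C σ (∫_{Ω'} |Dv| dH^n + 1) for the test function v = (u_σ − l)_+ (with l = sup_{∂Ω}|u_σ| boundary bound), where Ω' = {|Du_σ| > ε₁} and we split the left side over {|Du_σ| ≤ ε₁} and its complement. If ε₁ = σ^{1/2} and σ is small, then ∫_Ω |Dv| dH^n ≤ C' σ^{1/2}, and consequently by the Sobolev inequality ‖v‖_{n/(n−1)} ≤ C'' σ^{1/2}. -/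
/-!
Write `ε = σ^{1/2}` and `X = ∫_{|Du| > ε} |Dv|`. Where `|Du| ≤ ε` also `|Dv| ≤ ε`, contributing
at most `|Ω| ε`. Where `|Du| > ε` (and `ε ≤ 1`) the density `Dv·Du/√(1+|Du|²) = |Dv||Du|/√(1+|Du|²)`
is at least `(ε/2)|Dv|`, so the hypothesis gives `(ε/2) X ≤ C ε² (X + 1)`, which absorbs into
`X ≤ 4 C ε` as soon as `4 C ε ≤ 1`.

Since `v = (u - l)₊` is not `C¹`, the Gagliardo–Nirenberg–Sobolev inequality is applied instead to
`δ ψ((u - l)/δ)` extended by zero off `Ω`, where `ψ` is `C¹`, vanishes on `(-∞, 1]`, has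
`0 ≤ ψ' ≤ 1` and stays within `2` of `s ↦ s₊`. As `u ≤ l` on `∂Ω`, these functions vanish near
`∂Ω`, so they are `C¹` with compact support, and their gradients are bounded by `|Dv|`. Fatou's
lemma lets `δ → 0`.
-/

open MeasureTheory Set Filter Topology

theorem half_le_div_sqrt_one_add_sq {ε t : ℝ} (hε₀ : 0 ≤ ε) (hε₁ : ε ≤ 1) (ht : ε < t) :
    ε / 2 ≤ t / √(1 + t ^ 2) := by
  have hsqrt : √(1 + t ^ 2) ≤ 1 + t := Real.sqrt_le_iff.2 ⟨by linarith, by nlinarith⟩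
  rw [div_le_div_iff₀ two_pos (by positivity)]
  nlinarith [mul_le_mul_of_nonneg_left hsqrt hε₀]

theorem div_sqrt_one_add_sq_le_one (t : ℝ) : t / √(1 + t ^ 2) ≤ 1 :=
  div_le_one_of_le₀ ((le_abs_self t).trans (Real.abs_le_sqrt (by linarith [sq_nonneg t])))
    (Real.sqrt_nonneg _)

section Absorption

variable {α : Type*} [MeasurableSpace α] {μ : Measure α} {s : Set α} {a t : α → ℝ} {C ε : ℝ}

theorem setIntegral_le_of_energy_le (hs : MeasurableSet s) (ha : IntegrableOn a s μ)
    (ht : Measurable t) (ha₀ : ∀ x, 0 ≤ a x) (hat : ∀ x, a x ≤ t x) (hε₀ : 0 < ε) (hε₁ : ε ≤ 1)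
    (hCε : 4 * C * ε ≤ 1)
    (henergy : ∫ x in s, a x * t x / √(1 + t x ^ 2) ∂μ
      ≤ C * ε ^ 2 * ((∫ x in {x | x ∈ s ∧ ε < t x}, a x ∂μ) + 1)) :
    ∫ x in {x | x ∈ s ∧ ε < t x}, a x ∂μ ≤ 4 * C * ε := by
  set B := {x | x ∈ s ∧ ε < t x}
  set X := ∫ x in B, a x ∂μ
  have hBs : B ⊆ s := fun x hx => hx.1
  have hF₀ : ∀ x, 0 ≤ a x * t x / √(1 + t x ^ 2) := fun x =>
    div_nonneg (mul_nonneg (ha₀ x) ((ha₀ x).trans (hat x))) (Real.sqrt_nonneg _)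
  have hFa : ∀ x, a x * t x / √(1 + t x ^ 2) ≤ a x := fun x => by
    rw [mul_div_assoc]
    exact mul_le_of_le_one_right (ha₀ x) (div_sqrt_one_add_sq_le_one _)
  have hF : IntegrableOn (fun x => a x * t x / √(1 + t x ^ 2)) s μ :=
    ha.mono' ((ha.1.mul ht.aestronglyMeasurable).div₀ (by fun_prop)) (ae_of_all _ fun x => by
      rw [Real.norm_of_nonneg (hF₀ x)]; exact hFa x)
  have hlower : ε / 2 * X ≤ ∫ x in B, a x * t x / √(1 + t x ^ 2) ∂μ := by
    rw [← integral_const_mul]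
    refine setIntegral_mono_on ((ha.mono_set hBs).const_mul _) (hF.mono_set hBs)
      (hs.inter (measurableSet_lt measurable_const ht)) fun x hx => ?_
    rw [mul_div_assoc, mul_comm]
    exact mul_le_mul_of_nonneg_left (half_le_div_sqrt_one_add_sq hε₀.le hε₁ hx.2) (ha₀ x)
  have hB : ∫ x in B, a x * t x / √(1 + t x ^ 2) ∂μ
      ≤ ∫ x in s, a x * t x / √(1 + t x ^ 2) ∂μ :=
    setIntegral_mono_set hF (ae_of_all _ hF₀) hBs.eventuallyLE
  have hX₀ : 0 ≤ X := integral_nonneg ha₀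
  nlinarith [mul_le_mul_of_nonneg_right hCε hX₀]

theorem integral_le_of_energy_le (hs : MeasurableSet s) (hμs : μ s ≠ ⊤)
    (ha : IntegrableOn a s μ) (ht : Measurable t) (ha₀ : ∀ x, 0 ≤ a x) (hat : ∀ x, a x ≤ t x)
    (hε₀ : 0 < ε) (hε₁ : ε ≤ 1) (hCε : 4 * C * ε ≤ 1)
    (henergy : ∫ x in s, a x * t x / √(1 + t x ^ 2) ∂μ
      ≤ C * ε ^ 2 * ((∫ x in {x | x ∈ s ∧ ε < t x}, a x ∂μ) + 1)) :
    ∫ x in s, a x ∂μ ≤ (μ.real s + 4 * C) * ε := by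
  have hsmall : ∫ x in s \ {x | ε < t x}, a x ∂μ ≤ ε * μ.real s :=
    calc ∫ x in s \ {x | ε < t x}, a x ∂μ ≤ ‖∫ x in s \ {x | ε < t x}, a x ∂μ‖ :=
          Real.le_norm_self _
      _ ≤ ε * μ.real (s \ {x | ε < t x}) :=
          norm_setIntegral_le_of_norm_le_const (measure_lt_top_of_subset sdiff_subset hμs)
            fun x hx => (Real.norm_of_nonneg (ha₀ x)).trans_le ((hat x).trans (not_lt.1 hx.2))
      _ ≤ ε * μ.real s := by gcongr; exact sdiff_subset
  rw [← integral_inter_add_sdiff (measurableSet_lt measurable_const ht) ha]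
  have hlarge := setIntegral_le_of_energy_le hs ha ht ha₀ hat hε₀ hε₁ hCε henergy
  change ∫ x in {x | x ∈ s ∧ ε < t x}, a x ∂μ + _ ≤ _
  linarith

end Absorption

noncomputable def smoothPosPart (s : ℝ) : ℝ := ∫ t in (0 : ℝ)..s, Real.smoothTransition (t - 1)

namespace smoothPosPart

theorem continuous_smoothTransition_sub_one :
    Continuous fun t : ℝ => Real.smoothTransition (t - 1) :=
  Real.smoothTransition.continuous.comp (continuous_sub_right 1)

theorem hasDerivAt (s : ℝ) : HasDerivAt smoothPosPart (Real.smoothTransition (s - 1)) s :=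
  (continuous_smoothTransition_sub_one.integral_hasStrictDerivAt 0 s).hasDerivAt

theorem contDiff : ContDiff ℝ 1 smoothPosPart := by
  rw [contDiff_one_iff_deriv]
  refine ⟨fun s => (hasDerivAt s).differentiableAt, ?_⟩
  rw [show deriv smoothPosPart = _ from funext fun s => (hasDerivAt s).deriv]
  exact continuous_smoothTransition_sub_one

theorem eq_zero_of_le_one {s : ℝ} (hs : s ≤ 1) : smoothPosPart s = 0 := by
  rw [smoothPosPart, intervalIntegral.integral_congr (g := fun _ => 0),
    intervalIntegral.integral_zero]
  intro t ht
  refine Real.smoothTransition.zero_of_nonpos ?_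
  rcases mem_uIcc.1 ht with h | h <;> linarith [h.1, h.2]

theorem nonneg (s : ℝ) : 0 ≤ smoothPosPart s := by
  rcases le_total s 0 with hs | hs
  · rw [eq_zero_of_le_one (by linarith)]
  · exact intervalIntegral.integral_nonneg hs fun t _ => Real.smoothTransition.nonneg _

theorem le_max_zero (s : ℝ) : smoothPosPart s ≤ max s 0 := by
  rcases le_total s 0 with hs | hs
  · rw [eq_zero_of_le_one (by linarith)]; exact le_max_right _ _
  · calc smoothPosPart s ≤ ∫ _ in (0 : ℝ)..s, (1 : ℝ) :=
          intervalIntegral.integral_mono_on hs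
            (continuous_smoothTransition_sub_one.intervalIntegrable _ _) intervalIntegrable_const
            fun t _ => Real.smoothTransition.le_one _
      _ = s := by simp
      _ ≤ max s 0 := le_max_left _ _

theorem max_zero_sub_two_le (s : ℝ) : max s 0 - 2 ≤ smoothPosPart s := by
  rcases le_total s 2 with hs | hs
  · linarith [nonneg s, max_le hs zero_le_two]
  · have hint (a b : ℝ) : IntervalIntegrable (fun t => Real.smoothTransition (t - 1)) volume a b :=
      continuous_smoothTransition_sub_one.intervalIntegrable a b
    have hsplit := intervalIntegral.integral_add_adjacent_intervals (hint 0 2) (hint 2 s)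
    have hhead : 0 ≤ ∫ t in (0 : ℝ)..2, Real.smoothTransition (t - 1) :=
      intervalIntegral.integral_nonneg zero_le_two fun t _ => Real.smoothTransition.nonneg _
    have htail : s - 2 ≤ ∫ t in (2 : ℝ)..s, Real.smoothTransition (t - 1) :=
      calc s - 2 = ∫ _ in (2 : ℝ)..s, (1 : ℝ) := by simp
        _ ≤ _ := intervalIntegral.integral_mono_on hs intervalIntegrable_const
            (hint 2 s) fun t ht =>
              (Real.smoothTransition.one_of_one_le (by linarith [ht.1])).ge
    rw [max_eq_left (by linarith), smoothPosPart, ← hsplit]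
    linarith

theorem tendsto_mul_div_nhdsGT (s : ℝ) :
    Tendsto (fun δ => δ * smoothPosPart (s / δ)) (𝓝[>] 0) (𝓝 (max s 0)) := by
  have hscale : ∀ δ : ℝ, 0 < δ → δ * max (s / δ) 0 = max s 0 := fun δ hδ => by
    rw [mul_max_of_nonneg _ _ hδ.le, mul_div_cancel₀ _ hδ.ne', mul_zero]
  have hlower : Tendsto (fun δ => max s 0 - 2 * δ) (𝓝[>] 0) (𝓝 (max s 0)) := by
    refine tendsto_nhdsWithin_of_tendsto_nhds ?_
    exact (by fun_prop : Continuous fun δ : ℝ => max s 0 - 2 * δ).tendsto' 0 _ (by ring)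
  refine tendsto_of_tendsto_of_tendsto_of_le_of_le' hlower tendsto_const_nhds ?_ ?_
  · filter_upwards [self_mem_nhdsWithin] with δ (hδ : 0 < δ)
    rw [← hscale δ hδ]
    nlinarith [max_zero_sub_two_le (s / δ)]
  · filter_upwards [self_mem_nhdsWithin] with δ (hδ : 0 < δ)
    rw [← hscale δ hδ]
    exact mul_le_mul_of_nonneg_left (le_max_zero _) hδ.le

end smoothPosPart

section SmoothPosPartOn

variable {E : Type*} {Ω : Set E} {f : E → ℝ} {δ : ℝ}

noncomputable def smoothPosPartOn (Ω : Set E) (f : E → ℝ) (δ : ℝ) : E → ℝ :=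
  Ω.indicator fun x => δ * smoothPosPart (f x / δ)

theorem smoothPosPartOn_eventuallyEq_zero [TopologicalSpace E] (hf : ContinuousOn f (closure Ω))
    (hfΩ : ∀ x ∈ frontier Ω, f x ≤ 0) (hδ : 0 < δ) {x : E} (hx : x ∉ interior Ω) :
    smoothPosPartOn Ω f δ =ᶠ[𝓝 x] 0 := by
  have hsmall : ∀ᶠ y in 𝓝 x, y ∈ closure Ω → f y < δ := by
    by_cases hxΩ : x ∈ closure Ω
    · have hfx : f x < δ := (hfΩ x ⟨hxΩ, hx⟩).trans_lt hδ
      exact eventually_nhdsWithin_iff.1 (hf x hxΩ (Iio_mem_nhds hfx))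
    · filter_upwards [isClosed_closure.isOpen_compl.mem_nhds hxΩ] with y hy hyΩ
      exact absurd hyΩ hy
  filter_upwards [hsmall] with y hy
  by_cases hyΩ : y ∈ Ω
  · have hle : f y / δ ≤ 1 := (div_le_one hδ).2 (hy (subset_closure hyΩ)).le
    simp [smoothPosPartOn, hyΩ, smoothPosPart.eq_zero_of_le_one hle]
  · simp [smoothPosPartOn, hyΩ]

section Normed

variable [NormedAddCommGroup E] [NormedSpace ℝ E]

theorem hasFDerivAt_smoothPosPartOn (hΩ : IsOpen Ω) (hδ : δ ≠ 0) {x : E} (hx : x ∈ Ω)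
    (hf : DifferentiableAt ℝ f x) :
    HasFDerivAt (smoothPosPartOn Ω f δ)
      (Real.smoothTransition (f x / δ - 1) • fderiv ℝ f x) x := by
  have hscaled : HasDerivAt (fun r => δ * smoothPosPart (r / δ))
      (Real.smoothTransition (f x / δ - 1)) (f x) := by
    refine (((smoothPosPart.hasDerivAt (f x / δ)).comp (f x)
      ((hasDerivAt_id _).div_const δ)).const_mul δ).congr_deriv ?_
    field_simp
  refine (hscaled.comp_hasFDerivAt x hf.hasFDerivAt).congr_of_eventuallyEq ?_
  filter_upwards [hΩ.mem_nhds hx] with y hy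
  simp [smoothPosPartOn, hy]

theorem contDiff_smoothPosPartOn (hΩ : IsOpen Ω) (hf : ContDiffOn ℝ 1 f (closure Ω))
    (hfΩ : ∀ x ∈ frontier Ω, f x ≤ 0) (hδ : 0 < δ) : ContDiff ℝ 1 (smoothPosPartOn Ω f δ) := by
  refine contDiff_iff_contDiffAt.2 fun x => ?_
  by_cases hx : x ∈ Ω
  · have hfx : ContDiffAt ℝ 1 f x := (hf.mono subset_closure).contDiffAt (hΩ.mem_nhds hx)
    have hscaled : ContDiff ℝ 1 fun r => δ * smoothPosPart (r / δ) :=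
      contDiff_const.mul (smoothPosPart.contDiff.comp (contDiff_id.div_const δ))
    refine (hscaled.contDiffAt.comp x hfx).congr_of_eventuallyEq ?_
    filter_upwards [hΩ.mem_nhds hx] with y hy
    simp [smoothPosPartOn, hy]
  · exact contDiffAt_const.congr_of_eventuallyEq
      (smoothPosPartOn_eventuallyEq_zero hf.continuousOn hfΩ hδ (by rwa [hΩ.interior_eq]))

omit [NormedSpace ℝ E] in
theorem hasCompactSupport_smoothPosPartOn [ProperSpace E] (hΩ : Bornology.IsBounded Ω) :
    HasCompactSupport (smoothPosPartOn Ω f δ) :=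
  hΩ.isCompact_closure.of_isClosed_subset (isClosed_tsupport _)
    (closure_mono support_indicator_subset)

theorem enorm_fderiv_smoothPosPartOn_le (hΩ : IsOpen Ω) (hf : ContDiffOn ℝ 1 f (closure Ω))
    (hfΩ : ∀ x ∈ frontier Ω, f x ≤ 0) (hδ : 0 < δ) {w : E → ENNReal}
    (hw : ∀ x ∈ Ω, 0 < f x → ‖fderiv ℝ f x‖ₑ ≤ w x) (x : E) :
    ‖fderiv ℝ (smoothPosPartOn Ω f δ) x‖ₑ ≤ Ω.indicator w x := by
  by_cases hx : x ∈ Ω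
  · have hfx : DifferentiableAt ℝ f x :=
      ((hf.mono subset_closure).contDiffAt (hΩ.mem_nhds hx)).differentiableAt one_ne_zero
    rw [(hasFDerivAt_smoothPosPartOn hΩ hδ.ne' hx hfx).fderiv, indicator_of_mem hx, enorm_smul]
    rcases le_or_gt (f x) 0 with hfx₀ | hfx₀
    · rw [Real.smoothTransition.zero_of_nonpos
        (sub_nonpos.2 ((div_nonpos_of_nonpos_of_nonneg hfx₀ hδ.le).trans zero_le_one))]
      simp
    · refine (mul_le_of_le_one_left' ?_).trans (hw x hx hfx₀)
      rw [Real.enorm_of_nonneg (Real.smoothTransition.nonneg _)]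
      exact ENNReal.ofReal_le_one.2 (Real.smoothTransition.le_one _)
  · rw [(smoothPosPartOn_eventuallyEq_zero hf.continuousOn hfΩ hδ
      (by rwa [hΩ.interior_eq])).fderiv_eq, indicator_of_notMem hx]
    simp [enorm_eq_nnnorm]

end Normed

theorem tendsto_smoothPosPartOn {x : E} (hx : x ∈ Ω) :
    Tendsto (fun δ => smoothPosPartOn Ω f δ x) (𝓝[>] 0) (𝓝 (max (f x) 0)) := by
  simpa [smoothPosPartOn, hx] using smoothPosPart.tendsto_mul_div_nhdsGT (f x)

end SmoothPosPartOn

theorem MeasureTheory.lintegral_le_of_tendsto {α ι : Type*} [MeasurableSpace α] {μ : Measure α}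
    {l : Filter ι} [l.IsCountablyGenerated] [l.NeBot] {f : ι → α → ENNReal} {g : α → ENNReal}
    {R : ENNReal}
    (hf : ∀ i, AEMeasurable (f i) μ) (hfg : ∀ᵐ x ∂μ, Tendsto (fun i => f i x) l (𝓝 (g x)))
    (hR : ∃ᶠ i in l, ∫⁻ x, f i x ∂μ ≤ R) :
    ∫⁻ x, g x ∂μ ≤ R :=
  calc ∫⁻ x, g x ∂μ = ∫⁻ x, liminf (fun i => f i x) l ∂μ :=
        lintegral_congr_ae (hfg.mono fun _ hx => hx.liminf_eq.symm)
    _ ≤ liminf (fun i => ∫⁻ x, f i x ∂μ) l := lintegral_liminf_le' hf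
    _ ≤ R := liminf_le_of_frequently_le' hR

theorem lintegral_enorm_max_zero_rpow_le {E : Type*} [NormedAddCommGroup E] [NormedSpace ℝ E]
    [MeasurableSpace E] [BorelSpace E] [FiniteDimensional ℝ E] (μ : Measure E)
    [μ.IsAddHaarMeasure] {Ω : Set E} (hΩ : IsOpen Ω) (hΩb : Bornology.IsBounded Ω) {f : E → ℝ}
    (hf : ContDiffOn ℝ 1 f (closure Ω)) (hfΩ : ∀ x ∈ frontier Ω, f x ≤ 0) {w : E → ENNReal}
    (hw : ∀ x ∈ Ω, 0 < f x → ‖fderiv ℝ f x‖ₑ ≤ w x) {p : ℝ}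
    (hp : (Module.finrank ℝ E : ℝ).HolderConjugate p) :
    ∫⁻ x in Ω, ‖max (f x) 0‖ₑ ^ p ∂μ
      ≤ lintegralPowLePowLIntegralFDerivConst μ p * (∫⁻ x in Ω, w x ∂μ) ^ p := by
  have hδ : ∀ k : ℕ, (0 : ℝ) < 1 / (k + 1) := fun k => Nat.one_div_pos_of_nat
  have hδ₀ : Tendsto (fun k : ℕ => (1 : ℝ) / (k + 1)) atTop (𝓝[>] 0) :=
    tendsto_nhdsWithin_iff.2 ⟨tendsto_one_div_add_atTop_nhds_zero_nat, .of_forall hδ⟩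
  have hpow : Continuous fun r : ℝ => ‖r‖ₑ ^ p :=
    (ENNReal.continuous_rpow_const).comp continuous_enorm
  refine lintegral_le_of_tendsto (l := (atTop : Filter ℕ))
    (f := fun k x => ‖smoothPosPartOn Ω f (1 / (k + 1)) x‖ₑ ^ p) (fun k => ?_) ?_
    (Eventually.of_forall fun k => ?_).frequently
  · exact (hpow.comp (contDiff_smoothPosPartOn hΩ hf hfΩ (hδ k)).continuous).aemeasurable
  · refine ae_restrict_of_forall_mem hΩ.measurableSet fun x hx => ?_
    exact (hpow.tendsto _).comp ((tendsto_smoothPosPartOn hx).comp hδ₀)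
  · calc ∫⁻ x in Ω, ‖smoothPosPartOn Ω f (1 / (k + 1)) x‖ₑ ^ p ∂μ
        ≤ ∫⁻ x, ‖smoothPosPartOn Ω f (1 / (k + 1)) x‖ₑ ^ p ∂μ := setLIntegral_le_lintegral _ _
      _ ≤ lintegralPowLePowLIntegralFDerivConst μ p
            * (∫⁻ x, ‖fderiv ℝ (smoothPosPartOn Ω f (1 / (k + 1))) x‖ₑ ∂μ) ^ p :=
          lintegral_pow_le_pow_lintegral_fderiv μ (contDiff_smoothPosPartOn hΩ hf hfΩ (hδ k))
            (hasCompactSupport_smoothPosPartOn hΩb) hp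
      _ ≤ lintegralPowLePowLIntegralFDerivConst μ p * (∫⁻ x in Ω, w x ∂μ) ^ p := by
          rw [← lintegral_indicator hΩ.measurableSet]
          gcongr
          · exact hp.symm.nonneg
          · exact enorm_fderiv_smoothPosPartOn_le hΩ hf hfΩ (hδ k) hw _

theorem norm_gradient {E : Type*} [NormedAddCommGroup E] [InnerProductSpace ℝ E] [CompleteSpace E]
    (f : E → ℝ) (x : E) : ‖gradient f x‖ = ‖fderiv ℝ f x‖ :=
  LinearIsometryEquiv.norm_map _ _

theorem integral_max_sub_rpow_rpow_inv_le {E : Type*} [NormedAddCommGroup E]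
    [InnerProductSpace ℝ E] [MeasurableSpace E] [BorelSpace E] [FiniteDimensional ℝ E]
    (μ : Measure E) [μ.IsAddHaarMeasure] {Ω : Set E} (hΩ : IsOpen Ω)
    (hΩb : Bornology.IsBounded Ω) {u : E → ℝ} (hu : ContDiffOn ℝ 1 u (closure Ω)) {l : ℝ}
    (hl : ∀ x ∈ frontier Ω, u x ≤ l) {Dv : E → E}
    (hDv : ∀ x, Dv x = if l < u x then gradient u x else 0)
    (hDvΩ : IntegrableOn (fun x => ‖Dv x‖) Ω μ) {p : ℝ}
    (hp : (Module.finrank ℝ E : ℝ).HolderConjugate p) :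
    (∫ x in Ω, max (u x - l) 0 ^ p ∂μ) ^ p⁻¹
      ≤ (lintegralPowLePowLIntegralFDerivConst μ p : ℝ) ^ p⁻¹ * ∫ x in Ω, ‖Dv x‖ ∂μ := by
  have hp₀ : 0 < p := hp.symm.pos
  have hw : ∀ x ∈ Ω, 0 < u x - l → ‖fderiv ℝ (fun y => u y - l) x‖ₑ ≤ ‖Dv x‖ₑ := by
    intro x _ hx
    rw [fderiv_sub_const, hDv x, if_pos (sub_pos.1 hx), ← ofReal_norm, ← ofReal_norm,
      norm_gradient]
  have hGNS := lintegral_enorm_max_zero_rpow_le μ hΩ hΩb (hu.sub contDiffOn_const)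
    (fun x hx => sub_nonpos.2 (hl x hx)) hw hp
  have hv : AEStronglyMeasurable (fun x => max (u x - l) 0 ^ p) (μ.restrict Ω) :=
    (ContinuousOn.rpow_const (((hu.continuousOn.mono subset_closure).sub
      continuousOn_const).sup continuousOn_const) fun _ _ => Or.inr hp₀.le).aestronglyMeasurable
      hΩ.measurableSet
  have hLHS : ∫ x in Ω, max (u x - l) 0 ^ p ∂μ = (∫⁻ x in Ω, ‖max (u x - l) 0‖ₑ ^ p ∂μ).toReal := by
    rw [integral_eq_lintegral_of_nonneg_ae (ae_of_all _ fun x => by positivity) hv]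
    congr 1
    refine lintegral_congr fun x => ?_
    rw [Real.enorm_of_nonneg (le_max_right _ _),
      ENNReal.ofReal_rpow_of_nonneg (le_max_right _ _) hp₀.le]
  have hRHS : ∫⁻ x in Ω, ‖Dv x‖ₑ ∂μ = ENNReal.ofReal (∫ x in Ω, ‖Dv x‖ ∂μ) := by
    rw [ofReal_integral_eq_lintegral_ofReal hDvΩ (ae_of_all _ fun x => norm_nonneg _)]
    simp only [ofReal_norm]
  rw [hRHS] at hGNS
  calc (∫ x in Ω, max (u x - l) 0 ^ p ∂μ) ^ p⁻¹
      = ((∫⁻ x in Ω, ‖max (u x - l) 0‖ₑ ^ p ∂μ) ^ p⁻¹).toReal := by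
        rw [hLHS, ENNReal.toReal_rpow]
    _ ≤ ((lintegralPowLePowLIntegralFDerivConst μ p
          * ENNReal.ofReal (∫ x in Ω, ‖Dv x‖ ∂μ) ^ p) ^ p⁻¹).toReal :=
        ENNReal.toReal_mono (by finiteness) (ENNReal.rpow_le_rpow hGNS (by positivity))
    _ = (lintegralPowLePowLIntegralFDerivConst μ p : ℝ) ^ p⁻¹ * ∫ x in Ω, ‖Dv x‖ ∂μ := by
        rw [ENNReal.mul_rpow_of_nonneg _ _ (inv_nonneg.2 hp₀.le), ← ENNReal.rpow_mul,
          mul_inv_cancel₀ hp₀.ne', ENNReal.rpow_one, ENNReal.toReal_mul, ← ENNReal.toReal_rpow,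
          ENNReal.coe_toReal, ENNReal.toReal_ofReal (integral_nonneg fun x => norm_nonneg _)]

/-- Gradient absorption and Sobolev estimate from the existence proof:
on a bounded open `Ω ⊆ ℝ^n`, if `u_σ ∈ C¹(Ω̄)` with boundary bound `l`,
`v = (u_σ - l)₊` and `Dv = Du_σ · 1_{u_σ > l}` satisfy the tested energy inequality
`∫_Ω Dv·Du_σ/√(1+|Du_σ|²) ≤ C σ (∫_{|Du_σ| > ε₁} |Dv| + 1)` with `ε₁ = σ^{1/2}`, then for
all small `σ`: `∫_Ω |Dv| ≤ C' σ^{1/2}` and, by the Sobolev inequality,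
`‖v‖_{n/(n-1)} ≤ C'' σ^{1/2}`. -/
theorem stmt17 (n : ℕ) (hn : 2 ≤ n)
    (Ω : Set (EuclideanSpace ℝ (Fin n))) (hΩ : IsOpen Ω)
    (hΩb : Bornology.IsBounded Ω) (C : ℝ) (hC : 0 < C) :
    ∃ σ₀ > (0 : ℝ), ∃ C' > (0 : ℝ), ∃ C'' > (0 : ℝ),
      ∀ σ ∈ Set.Ioo (0 : ℝ) σ₀,
      ∀ u : EuclideanSpace ℝ (Fin n) → ℝ, ContDiffOn ℝ 1 u (closure Ω) →
      ∀ l : ℝ, (∀ x ∈ frontier Ω, |u x| ≤ l) →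
      ∀ Dv : EuclideanSpace ℝ (Fin n) → EuclideanSpace ℝ (Fin n),
        (∀ x, Dv x = if l < u x then gradient u x else 0) →
        IntegrableOn (fun x => ‖Dv x‖) Ω volume →
        (∫ x in Ω, (inner ℝ (Dv x) (gradient u x) : ℝ) /
              Real.sqrt (1 + ‖gradient u x‖ ^ 2)
          ≤ C * σ * ((∫ x in {x | x ∈ Ω ∧ σ ^ ((1 : ℝ) / 2) < ‖gradient u x‖},
              ‖Dv x‖) + 1)) →
        (∫ x in Ω, ‖Dv x‖) ≤ C' * σ ^ ((1 : ℝ) / 2) ∧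
        (∫ x in Ω, max (u x - l) 0 ^ ((n : ℝ) / ((n : ℝ) - 1))) ^ (((n : ℝ) - 1) / n)
          ≤ C'' * σ ^ ((1 : ℝ) / 2) := by
  have hp : (Module.finrank ℝ (EuclideanSpace ℝ (Fin n)) : ℝ).HolderConjugate (n / (n - 1)) := by
    rw [finrank_euclideanSpace_fin]
    exact .conjExponent (by exact_mod_cast hn)
  set K := (lintegralPowLePowLIntegralFDerivConst (volume : Measure (EuclideanSpace ℝ (Fin n)))
    (n / (n - 1)) : ℝ) ^ (((n : ℝ) - 1) / n)
  set C' := volume.real Ω + 4 * C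
  refine ⟨min 1 (4 * C)⁻¹ ^ 2, by positivity, C', by positivity, (K + 1) * C', by positivity, ?_⟩
  rintro σ ⟨hσ₀, hσ⟩ u hu l hl Dv hDv hDvΩ henergy
  rw [← Real.sqrt_eq_rpow] at henergy ⊢
  have hε₀ : 0 < √σ := Real.sqrt_pos.2 hσ₀
  have hε : √σ < min 1 (4 * C)⁻¹ := (Real.sqrt_lt' (by positivity)).2 hσ
  have hCε : 4 * C * √σ ≤ 1 := by
    have := mul_lt_mul_of_pos_left (hε.trans_le (min_le_right _ _)) (by positivity : 0 < 4 * C)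
    rw [mul_inv_cancel₀ (by positivity)] at this
    exact this.le
  have hDv_le : ∀ x, ‖Dv x‖ ≤ ‖gradient u x‖ := fun x => by
    rw [hDv x]; split_ifs <;> simp
  have hinner : ∀ x, inner ℝ (Dv x) (gradient u x) = ‖Dv x‖ * ‖gradient u x‖ := fun x => by
    rw [hDv x]; split_ifs <;> simp [sq]
  have hgrad : ∫ x in Ω, ‖Dv x‖ ≤ C' * √σ :=
    integral_le_of_energy_le hΩ.measurableSet hΩb.measure_lt_top.ne hDvΩ
      (by simpa only [norm_gradient] using (measurable_fderiv ℝ u).norm) (fun x => norm_nonneg _)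
      hDv_le hε₀ (hε.le.trans (min_le_left _ _)) hCε
      (by simpa only [hinner, Real.sq_sqrt hσ₀.le] using henergy)
  refine ⟨hgrad, ?_⟩
  calc (∫ x in Ω, max (u x - l) 0 ^ ((n : ℝ) / ((n : ℝ) - 1))) ^ (((n : ℝ) - 1) / n)
      ≤ K * ∫ x in Ω, ‖Dv x‖ := by
        simpa only [inv_div] using integral_max_sub_rpow_rpow_inv_le volume hΩ hΩb hu
          (fun x hx => (le_abs_self _).trans (hl x hx)) hDv hDvΩ hp
    _ ≤ K * (C' * √σ) := by gcongr
    _ ≤ (K + 1) * C' * √σ := by nlinarith [mul_pos (by positivity : (0 : ℝ) < C') hε₀]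
end
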